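/- arXiv:2506.09188 — 5 statements merged into one kernel-verified Lean document; each statement's English description precedes it below -/
import Mathlib

section
/- Single-timepoint interventional flip effects are weighted average treatment effects (Proposition 1): Assume E[f(X)] > 0. Then E[Y(D_f(1)) − Y(D_f(0))] / E[D_f(1) − D_f(0)] = E[E(Y(1) − Y(0) | X) · f(X)] / E[f(X)]; moreover E[D_f(1) − D_f(0)] = E[f(X)] and E[Y(D_f(1)) − Y(D_f(0))] = E[E(Y(1) − Y(0) | X) · f(X)]. -/
open MeasureTheory ProbabilityTheory Set Filter

/-!
Whatever the value of `A`, the difference `D_f(1) - D_f(0)` is the indicator of `{V ≤ f(X)}`,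
so `Y(D_f(1)) - Y(D_f(0))` is that indicator times `Y(1) - Y(0)`. Since `V` is uniform and
independent of `(X, Y(0), Y(1))`, integrating out `V` first (Fubini on the product law) replaces
the indicator by its conditional probability `f(X)`. Finally
`E[f(X) (Y(1) - Y(0))] = E[E(Y(1) - Y(0) | X) f(X)]` because `f(X)` is bounded and `X`-measurable.
-/

lemma flip_one_sub_flip_zero (a v p : ℝ) :
    a + (1 - a) * (if v ≤ p then 1 else 0) - a * (if p < v then 1 else 0)
      = if v ≤ p then (1 : ℝ) else 0 := by
  rcases le_or_gt v p with h | h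
  · simp [h, not_lt.mpr h]
  · simp [h, not_le.mpr h]

lemma integral_uniform_ite_le {p : ℝ} (hp : p ∈ Icc (0 : ℝ) 1) :
    ∫ v in Icc (0 : ℝ) 1, (if v ≤ p then (1 : ℝ) else 0) = p := by
  have hset : Iic p ∩ Icc (0 : ℝ) 1 = Icc 0 p :=
    ext fun v => ⟨fun ⟨hvp, hv0, _⟩ => ⟨hv0, hvp⟩, fun ⟨hv0, hvp⟩ => ⟨hvp, hv0, hvp.trans hp.2⟩⟩
  have hind : (fun v : ℝ => if v ≤ p then (1 : ℝ) else 0) = (Iic p).indicator 1 := by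
    ext v; simp [indicator_apply]
  rw [hind, integral_indicator_one measurableSet_Iic, measureReal_restrict_apply measurableSet_Iic,
    hset, Real.volume_real_Icc_of_le hp.1, sub_zero]

section Uniform

variable {E : Type*} [MeasurableSpace E]

lemma measurable_ite_le_snd {g : E → ℝ} (hg : Measurable g) :
    Measurable fun p : E × ℝ => if p.2 ≤ g p.1 then (1 : ℝ) else 0 :=
  Measurable.ite (measurableSet_le measurable_snd (hg.comp measurable_fst)) measurable_const
    measurable_const

lemma integral_prod_uniform_ite_le_mul {ν : Measure E} [SFinite ν] {g G : E → ℝ}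
    (hg : Measurable g) (hg01 : ∀ e, g e ∈ Icc (0 : ℝ) 1) (hG : Integrable G ν) :
    ∫ p, (if p.2 ≤ g p.1 then (1 : ℝ) else 0) * G p.1 ∂(ν.prod (volume.restrict (Icc 0 1)))
      = ∫ e, g e * G e ∂ν := by
  have hint : Integrable (fun p : E × ℝ => (if p.2 ≤ g p.1 then (1 : ℝ) else 0) * G p.1)
      (ν.prod (volume.restrict (Icc 0 1))) := by
    refine (hG.comp_fst _).norm.mono' ?_ (Eventually.of_forall fun p => ?_)
    · exact (measurable_ite_le_snd hg).aestronglyMeasurable.mul hG.1.comp_fst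
    · split_ifs <;> simp
  rw [integral_prod _ hint]
  refine integral_congr_ae (Eventually.of_forall fun e => ?_)
  simp only [integral_mul_const, integral_uniform_ite_le (hg01 e)]

lemma integral_ite_le_mul_of_indepFun_uniform {Ω : Type*} [MeasurableSpace Ω] {μ : Measure Ω}
    [IsFiniteMeasure μ] {V : Ω → ℝ} {W : Ω → E} (hV : AEMeasurable V μ) (hW : AEMeasurable W μ)
    (hVunif : μ.map V = volume.restrict (Icc (0 : ℝ) 1)) (hindep : IndepFun V W μ)
    {g G : E → ℝ} (hg : Measurable g) (hg01 : ∀ e, g e ∈ Icc (0 : ℝ) 1) (hG : Measurable G)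
    (hGW : Integrable (G ∘ W) μ) :
    ∫ ω, (if V ω ≤ g (W ω) then (1 : ℝ) else 0) * G (W ω) ∂μ = ∫ ω, g (W ω) * G (W ω) ∂μ := by
  have hmap : μ.map (fun ω => (W ω, V ω)) = (μ.map W).prod (volume.restrict (Icc 0 1)) := by
    rw [← hVunif]
    exact (indepFun_iff_map_prod_eq_prod_map_map hW hV).mp hindep.symm
  have hH : Measurable fun p : E × ℝ => (if p.2 ≤ g p.1 then (1 : ℝ) else 0) * G p.1 :=
    (measurable_ite_le_snd hg).mul (hG.comp measurable_fst)
  have hGν : Integrable G (μ.map W) := (integrable_map_measure hG.aestronglyMeasurable hW).mpr hGW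
  calc ∫ ω, (if V ω ≤ g (W ω) then (1 : ℝ) else 0) * G (W ω) ∂μ
      = ∫ p, (if p.2 ≤ g p.1 then (1 : ℝ) else 0) * G p.1 ∂(μ.map fun ω => (W ω, V ω)) :=
        (integral_map (hW.prodMk hV) hH.aestronglyMeasurable).symm
    _ = ∫ e, g e * G e ∂(μ.map W) := by
        rw [hmap]
        exact integral_prod_uniform_ite_le_mul hg hg01 hGν
    _ = ∫ ω, g (W ω) * G (W ω) ∂μ := integral_map hW (hg.mul hG).aestronglyMeasurable

end Uniform

lemma integral_condExp_mul_of_bound {Ω : Type*} {m m₀ : MeasurableSpace Ω} {μ : Measure Ω}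
    [IsFiniteMeasure μ] (hm : m ≤ m₀) {g Z : Ω → ℝ} (hg : StronglyMeasurable[m] g)
    (hZ : Integrable Z μ) (c : ℝ) (hgc : ∀ᵐ ω ∂μ, ‖g ω‖ ≤ c) :
    ∫ ω, μ[Z|m] ω * g ω ∂μ = ∫ ω, g ω * Z ω ∂μ := by
  calc ∫ ω, μ[Z|m] ω * g ω ∂μ = ∫ ω, μ[g * Z|m] ω ∂μ :=
        integral_congr_ae <| (condExp_stronglyMeasurable_mul_of_bound hm hg hZ c hgc).mono
          fun ω h => by rw [h, Pi.mul_apply, mul_comm]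
    _ = ∫ ω, g ω * Z ω ∂μ := integral_condExp hm

theorem flip_effect_is_WATE_general
    {Ω : Type*} [MeasurableSpace Ω] (μ : Measure Ω) [IsProbabilityMeasure μ]
    (d : ℕ) (X : Ω → (Fin d → ℝ)) (A : Ω → ℝ) (Y0 Y1 : Ω → ℝ) (V : Ω → ℝ)
    (f : (Fin d → ℝ) → ℝ)
    (hX : Measurable X)
    (hY0 : Integrable Y0 μ) (hY1 : Integrable Y1 μ)
    (hfm : Measurable f) (hf01 : ∀ x, f x ∈ Set.Icc (0:ℝ) 1)
    (hVm : Measurable V)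
    (hVunif : Measure.map V μ = volume.restrict (Set.Icc (0:ℝ) 1))
    (hindep : IndepFun V (fun ω => (X ω, A ω, Y0 ω, Y1 ω)) μ)
    (D0 D1 YD0 YD1 : Ω → ℝ)
    (hD0 : D0 = fun ω => A ω * (if f (X ω) < V ω then 1 else 0))
    (hD1 : D1 = fun ω => A ω + (1 - A ω) * (if V ω ≤ f (X ω) then 1 else 0))
    (hYD0 : YD0 = fun ω => D0 ω * Y1 ω + (1 - D0 ω) * Y0 ω)
    (hYD1 : YD1 = fun ω => D1 ω * Y1 ω + (1 - D1 ω) * Y0 ω) :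
    (∫ ω, (YD1 ω - YD0 ω) ∂μ) / (∫ ω, (D1 ω - D0 ω) ∂μ)
      = (∫ ω, (μ[fun ω' => Y1 ω' - Y0 ω' | MeasurableSpace.comap X inferInstance]) ω
            * f (X ω) ∂μ) / (∫ ω, f (X ω) ∂μ)
    ∧ (∫ ω, (D1 ω - D0 ω) ∂μ) = ∫ ω, f (X ω) ∂μ
    ∧ (∫ ω, (YD1 ω - YD0 ω) ∂μ)
        = ∫ ω, (μ[fun ω' => Y1 ω' - Y0 ω' | MeasurableSpace.comap X inferInstance]) ω
            * f (X ω) ∂μ := by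
  have hDsub : ∀ ω, D1 ω - D0 ω = if V ω ≤ f (X ω) then 1 else 0 := fun ω => by
    rw [hD0, hD1]
    exact flip_one_sub_flip_zero _ _ _
  have hYsub : ∀ ω, YD1 ω - YD0 ω = (if V ω ≤ f (X ω) then 1 else 0) * (Y1 ω - Y0 ω) := by
    intro ω
    rw [← hDsub, hYD0, hYD1]
    ring
  have hVW : IndepFun V (fun ω => (X ω, Y1 ω - Y0 ω)) μ :=
    hindep.comp measurable_id
      (by fun_prop : Measurable fun p : (Fin d → ℝ) × ℝ × ℝ × ℝ => (p.1, p.2.2.2 - p.2.2.1))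
  have hflip := fun G : (Fin d → ℝ) × ℝ → ℝ => integral_ite_le_mul_of_indepFun_uniform
    (W := fun ω => (X ω, Y1 ω - Y0 ω)) (g := fun e => f e.1) (G := G) hVm.aemeasurable
    (hX.aemeasurable.prodMk (hY1.sub hY0).aemeasurable) hVunif hVW (hfm.comp measurable_fst)
    fun e => hf01 e.1
  have hD : ∫ ω, (D1 ω - D0 ω) ∂μ = ∫ ω, f (X ω) ∂μ := by
    simpa only [hDsub, mul_one] using hflip _ measurable_const (integrable_const 1)
  have hY : ∫ ω, (YD1 ω - YD0 ω) ∂μ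
      = ∫ ω, (μ[fun ω' => Y1 ω' - Y0 ω' | MeasurableSpace.comap X inferInstance]) ω
          * f (X ω) ∂μ := by
    rw [integral_congr_ae (Eventually.of_forall hYsub), hflip _ measurable_snd (hY1.sub hY0)]
    exact (integral_condExp_mul_of_bound (g := fun ω => f (X ω)) hX.comap_le
      (hfm.comp (comap_measurable X)).stronglyMeasurable (hY1.sub hY0) 1
      (Eventually.of_forall fun ω => (Real.norm_of_nonneg (hf01 (X ω)).1).trans_le
        (hf01 (X ω)).2)).symm
  exact ⟨by rw [hD, hY], hD, hY⟩

/-- **Proposition 1 (Interventional flip effects are WATEs).**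
Single-timepoint data `(X, A, Y(0), Y(1))`, a weight function `f : ℝ^d → [0,1]`, and an
auxiliary uniform `V ⟂ (X, A, Y(0), Y(1))`.  The flip interventions are
`D_f(0) = A·1{V > f(X)}` and `D_f(1) = A + (1-A)·1{V ≤ f(X)}`, and `Y(D) = D·Y(1)+(1-D)·Y(0)`.
If `E[f(X)] > 0` then the interventional flip effect equals the WATE; moreover
`E[D_f(1) - D_f(0)] = E[f(X)]` and
`E[Y(D_f(1)) - Y(D_f(0))] = E[E(Y(1)-Y(0) | X)·f(X)]`. -/
theorem flip_effect_is_WATE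
    {Ω : Type*} [MeasurableSpace Ω] (μ : Measure Ω) [IsProbabilityMeasure μ]
    (d : ℕ) (X : Ω → (Fin d → ℝ)) (A : Ω → ℝ) (Y0 Y1 : Ω → ℝ) (V : Ω → ℝ)
    (f : (Fin d → ℝ) → ℝ)
    (hX : Measurable X) (hA : Measurable A)
    (hAval : ∀ ω, A ω = 0 ∨ A ω = 1)
    (hY0m : Measurable Y0) (hY1m : Measurable Y1)
    (hY0 : Integrable Y0 μ) (hY1 : Integrable Y1 μ)
    (hfm : Measurable f) (hf01 : ∀ x, f x ∈ Set.Icc (0:ℝ) 1)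
    (hVm : Measurable V)
    (hVunif : Measure.map V μ = volume.restrict (Set.Icc (0:ℝ) 1))
    (hindep : IndepFun V (fun ω => (X ω, A ω, Y0 ω, Y1 ω)) μ)
    (D0 D1 YD0 YD1 : Ω → ℝ)
    (hD0 : D0 = fun ω => A ω * (if f (X ω) < V ω then 1 else 0))
    (hD1 : D1 = fun ω => A ω + (1 - A ω) * (if V ω ≤ f (X ω) then 1 else 0))
    (hYD0 : YD0 = fun ω => D0 ω * Y1 ω + (1 - D0 ω) * Y0 ω)
    (hYD1 : YD1 = fun ω => D1 ω * Y1 ω + (1 - D1 ω) * Y0 ω)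
    (hpos : 0 < ∫ ω, f (X ω) ∂μ) :
    (∫ ω, (YD1 ω - YD0 ω) ∂μ) / (∫ ω, (D1 ω - D0 ω) ∂μ)
      = (∫ ω, (μ[fun ω' => Y1 ω' - Y0 ω' | MeasurableSpace.comap X inferInstance]) ω
            * f (X ω) ∂μ) / (∫ ω, f (X ω) ∂μ)
    ∧ (∫ ω, (D1 ω - D0 ω) ∂μ) = ∫ ω, f (X ω) ∂μ
    ∧ (∫ ω, (YD1 ω - YD0 ω) ∂μ)
        = ∫ ω, (μ[fun ω' => Y1 ω' - Y0 ω' | MeasurableSpace.comap X inferInstance]) ω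
            * f (X ω) ∂μ :=
  flip_effect_is_WATE_general μ d X A Y0 Y1 V f hX hY0 hY1 hfm hf01 hVm hVunif hindep D0 D1 YD0 YD1
    hD0 hD1 hYD0 hYD1
end

section
/- Conditional interpretation of the single-timepoint interventional flip effect: Assume P(V ≤ f(X)) > 0. Then E[Y(D_f(1)) − Y(D_f(0))] / E[D_f(1) − D_f(0)] = E[Y(1) − Y(0) | V ≤ f(X)], and P(V ≤ f(X)) = E[f(X)]. -/
open MeasureTheory ProbabilityTheory

/-! Whatever the value of `A`, `D_f(1) - D_f(0)` is the indicator of `{V ≤ f(X)}`, so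
`Y(D_f(1)) - Y(D_f(0)) = 1{V ≤ f(X)} (Y(1) - Y(0))` and both expectations of the ratio are
integrals over that event. Since `V` is uniform and independent of `X`, the law of `(X, V)` is a
product, and Fubini gives `P(V ≤ f(X)) = E[P(V ≤ t)|_{t = f(X)}] = E[f(X)]`. -/

lemma flip_sub_flip_eq_ite {a v t : ℝ} (ha : a = 0 ∨ a = 1) :
    (a + (1 - a) * (if v ≤ t then 1 else 0)) - a * (if t < v then 1 else 0)
      = if v ≤ t then 1 else 0 := by
  rcases ha with rfl | rfl <;> by_cases hvt : v ≤ t <;> simp [hvt, not_le.mp]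

lemma volume_restrict_Icc_zero_one_Iic {t : ℝ} (ht : t ∈ Set.Icc (0 : ℝ) 1) :
    volume.restrict (Set.Icc (0 : ℝ) 1) (Set.Iic t) = ENNReal.ofReal t := by
  rw [Measure.restrict_apply measurableSet_Iic, Set.inter_comm, ← Set.Ici_inter_Iic,
    Set.inter_assoc, Set.Iic_inter_Iic, inf_eq_right.mpr ht.2, Set.Ici_inter_Iic,
    Real.volume_Icc, sub_zero]

namespace ProbabilityTheory

lemma IndepFun.measure_le_comp_eq_lintegral {Ω E : Type*} [MeasurableSpace Ω]
    [MeasurableSpace E] {μ : Measure Ω} [IsFiniteMeasure μ] {X : Ω → E} {V : Ω → ℝ}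
    {g : E → ℝ} (hX : Measurable X) (hV : Measurable V) (hg : Measurable g)
    (hg01 : ∀ x, g x ∈ Set.Icc (0 : ℝ) 1)
    (hVunif : μ.map V = volume.restrict (Set.Icc (0 : ℝ) 1)) (hXV : IndepFun X V μ) :
    μ {ω | V ω ≤ g (X ω)} = ∫⁻ ω, ENNReal.ofReal (g (X ω)) ∂μ := by
  have hset : MeasurableSet {p : E × ℝ | p.2 ≤ g p.1} :=
    measurableSet_le measurable_snd (hg.comp measurable_fst)
  have hjoint := (indepFun_iff_map_prod_eq_prod_map_map hX.aemeasurable hV.aemeasurable).1 hXV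
  calc μ {ω | V ω ≤ g (X ω)} = μ.map (fun ω ↦ (X ω, V ω)) {p | p.2 ≤ g p.1} :=
        (Measure.map_apply (hX.prodMk hV) hset).symm
    _ = ∫⁻ x, μ.map V (Set.Iic (g x)) ∂μ.map X := by
        rw [hjoint, Measure.prod_apply hset]; rfl
    _ = ∫⁻ x, ENNReal.ofReal (g x) ∂μ.map X := by
        simp_rw [hVunif, volume_restrict_Icc_zero_one_Iic (hg01 _)]
    _ = ∫⁻ ω, ENNReal.ofReal (g (X ω)) ∂μ := lintegral_map hg.ennreal_ofReal hX

lemma IndepFun.measureReal_le_comp_eq_integral {Ω E : Type*} [MeasurableSpace Ω]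
    [MeasurableSpace E] {μ : Measure Ω} [IsFiniteMeasure μ] {X : Ω → E} {V : Ω → ℝ}
    {g : E → ℝ} (hX : Measurable X) (hV : Measurable V) (hg : Measurable g)
    (hg01 : ∀ x, g x ∈ Set.Icc (0 : ℝ) 1)
    (hVunif : μ.map V = volume.restrict (Set.Icc (0 : ℝ) 1)) (hXV : IndepFun X V μ) :
    μ.real {ω | V ω ≤ g (X ω)} = ∫ ω, g (X ω) ∂μ := by
  rw [integral_eq_lintegral_of_nonneg_ae (.of_forall fun ω ↦ (hg01 (X ω)).1)
    (hg.comp hX).aestronglyMeasurable, ← hXV.measure_le_comp_eq_lintegral hX hV hg hg01 hVunif]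
  rfl

end ProbabilityTheory

theorem flip_effect_conditional_interpretation_general
    {Ω : Type*} [MeasurableSpace Ω] (μ : Measure Ω) [IsProbabilityMeasure μ]
    (d : ℕ) (X : Ω → (Fin d → ℝ)) (A : Ω → ℝ) (Y0 Y1 : Ω → ℝ) (V : Ω → ℝ)
    (f : (Fin d → ℝ) → ℝ)
    (hX : Measurable X)
    (hAval : ∀ ω, A ω = 0 ∨ A ω = 1)
    (hfm : Measurable f) (hf01 : ∀ x, f x ∈ Set.Icc (0:ℝ) 1)
    (hVm : Measurable V)
    (hVunif : Measure.map V μ = volume.restrict (Set.Icc (0:ℝ) 1))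
    (hindep : IndepFun V (fun ω => (X ω, A ω, Y0 ω, Y1 ω)) μ)
    (D0 D1 YD0 YD1 : Ω → ℝ)
    (hD0 : D0 = fun ω => A ω * (if f (X ω) < V ω then 1 else 0))
    (hD1 : D1 = fun ω => A ω + (1 - A ω) * (if V ω ≤ f (X ω) then 1 else 0))
    (hYD0 : YD0 = fun ω => D0 ω * Y1 ω + (1 - D0 ω) * Y0 ω)
    (hYD1 : YD1 = fun ω => D1 ω * Y1 ω + (1 - D1 ω) * Y0 ω) :
    (∫ ω, (YD1 ω - YD0 ω) ∂μ) / (∫ ω, (D1 ω - D0 ω) ∂μ)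
      = (∫ ω in {ω | V ω ≤ f (X ω)}, (Y1 ω - Y0 ω) ∂μ)
          / (μ {ω | V ω ≤ f (X ω)}).toReal
    ∧ (μ {ω | V ω ≤ f (X ω)}).toReal = ∫ ω, f (X ω) ∂μ := by
  set s := {ω | V ω ≤ f (X ω)}
  have hs : MeasurableSet s := measurableSet_le hVm (hfm.comp hX)
  have hD : ∀ ω, D1 ω - D0 ω = s.indicator 1 ω := fun ω ↦ by
    rw [hD0, hD1, Set.indicator_apply]
    exact flip_sub_flip_eq_ite (hAval ω)
  have hYD : ∀ ω, YD1 ω - YD0 ω = s.indicator (fun ω ↦ Y1 ω - Y0 ω) ω := fun ω ↦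
    calc YD1 ω - YD0 ω = (D1 ω - D0 ω) * (Y1 ω - Y0 ω) := by rw [hYD0, hYD1]; ring
      _ = s.indicator (fun ω ↦ Y1 ω - Y0 ω) ω := by
        rw [hD, Set.indicator_apply, Set.indicator_apply]; split_ifs <;> simp
  have hXV : IndepFun X V μ := (hindep.comp measurable_id measurable_fst).symm
  refine ⟨?_, hXV.measureReal_le_comp_eq_integral hX hVm hfm hf01 hVunif⟩
  rw [integral_congr_ae (.of_forall hYD), integral_congr_ae (.of_forall hD),
    integral_indicator hs, integral_indicator_one hs]
  rfl

/-- **Conditional interpretation of the single-timepoint interventional flip effect.**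
With the flip interventions `D_f(0) = A·1{V > f(X)}`, `D_f(1) = A + (1-A)·1{V ≤ f(X)}` and
potential outcome `Y(D) = D·Y(1)+(1-D)·Y(0)`, if `P(V ≤ f(X)) > 0` then
`E[Y(D_f(1)) - Y(D_f(0))] / E[D_f(1) - D_f(0)] = E[Y(1) - Y(0) | V ≤ f(X)]`
and `P(V ≤ f(X)) = E[f(X)]`. -/
theorem flip_effect_conditional_interpretation
    {Ω : Type*} [MeasurableSpace Ω] (μ : Measure Ω) [IsProbabilityMeasure μ]
    (d : ℕ) (X : Ω → (Fin d → ℝ)) (A : Ω → ℝ) (Y0 Y1 : Ω → ℝ) (V : Ω → ℝ)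
    (f : (Fin d → ℝ) → ℝ)
    (hX : Measurable X) (hA : Measurable A)
    (hAval : ∀ ω, A ω = 0 ∨ A ω = 1)
    (hY0m : Measurable Y0) (hY1m : Measurable Y1)
    (hY0 : Integrable Y0 μ) (hY1 : Integrable Y1 μ)
    (hfm : Measurable f) (hf01 : ∀ x, f x ∈ Set.Icc (0:ℝ) 1)
    (hVm : Measurable V)
    (hVunif : Measure.map V μ = volume.restrict (Set.Icc (0:ℝ) 1))
    (hindep : IndepFun V (fun ω => (X ω, A ω, Y0 ω, Y1 ω)) μ)
    (D0 D1 YD0 YD1 : Ω → ℝ)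
    (hD0 : D0 = fun ω => A ω * (if f (X ω) < V ω then 1 else 0))
    (hD1 : D1 = fun ω => A ω + (1 - A ω) * (if V ω ≤ f (X ω) then 1 else 0))
    (hYD0 : YD0 = fun ω => D0 ω * Y1 ω + (1 - D0 ω) * Y0 ω)
    (hYD1 : YD1 = fun ω => D1 ω * Y1 ω + (1 - D1 ω) * Y0 ω)
    (hpos : 0 < μ {ω | V ω ≤ f (X ω)}) :
    (∫ ω, (YD1 ω - YD0 ω) ∂μ) / (∫ ω, (D1 ω - D0 ω) ∂μ)
      = (∫ ω in {ω | V ω ≤ f (X ω)}, (Y1 ω - Y0 ω) ∂μ)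
          / (μ {ω | V ω ≤ f (X ω)}).toReal
    ∧ (μ {ω | V ω ≤ f (X ω)}).toReal = ∫ ω, f (X ω) ∂μ :=
  flip_effect_conditional_interpretation_general μ d X A Y0 Y1 V f hX hAval hfm hf01 hVm hVunif
    hindep D0 D1 YD0 YD1 hD0 hD1 hYD0 hYD1
end

section
/- Conditional means of the weight influence function (Lemma phi-first-order): (i) For every t ≤ T and b ∈ {0,1}, E[φ_t(b; A_t, H_t) | H_t] = 0 almost surely. (ii) If φ̂_t is defined by substituting an estimated conditional probability P̂(A_t = a_t | H_t) = (a measurable function of H_t with values in (0,1)) for P(A_t = a_t | H_t) in the formula for φ_t, then almost surely E[φ̂_t(b; A_t, H_t) | H_t] = (2·1{b = a_t} − 1)·(P(A_t = a_t | H_t) − P̂(A_t = a_t | H_t))·[1 − s_t(P̂(A_t = a_t | H_t)) + s_t′(P̂(A_t = a_t | H_t))·(1 − P̂(A_t = a_t | H_t))]. -/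
open MeasureTheory ProbabilityTheory

/-! Write `φ_t = g(p)·(1{A_t = a_t} - p)` and `φ̂_t = g(p̂)·(1{A_t = a_t} - p̂)`, where
`g(x) = ±(1 - s_t(x) + s_t'(x)(1 - x))` is continuous. Since `p` and `p̂` are `H_t`-measurable and
take values in a compact set, `g(p)` and `g(p̂)` are bounded and `H_t`-measurable, so they pull out
of `E[· | H_t]`, leaving `E[1{A_t = a_t} | H_t] - p = p - p = 0`, resp. `p - p̂`. -/

section

variable {Ω : Type*} {m m₀ : MeasurableSpace Ω} {μ : Measure Ω}

theorem condExp_comp_mul_sub [IsFiniteMeasure μ] (hm : m ≤ m₀) {g : ℝ → ℝ} (hg : Continuous g)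
    {f q : Ω → ℝ} {R : ℝ} (hf : Integrable f μ) (hq : StronglyMeasurable[m] q)
    (hqR : ∀ᵐ ω ∂μ, |q ω| ≤ R) :
    μ[fun ω => g (q ω) * (f ω - q ω) | m] =ᵐ[μ] fun ω => g (q ω) * (μ[f | m] ω - q ω) := by
  obtain ⟨C, hC⟩ :=
    isCompact_Icc.exists_bound_of_continuousOn (hg.continuousOn (s := Set.Icc (-R) R))
  have hgq_bound : ∀ᵐ ω ∂μ, ‖g (q ω)‖ ≤ C := hqR.mono fun ω hω => hC _ (abs_le.mp hω)
  have hq_int : Integrable q μ := .of_bound (hq.mono hm).aestronglyMeasurable R hqR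
  have hpull : μ[(fun ω => g (q ω)) * (f - q) | m] =ᵐ[μ] (fun ω => g (q ω)) * μ[f - q | m] :=
    condExp_stronglyMeasurable_mul_of_bound hm (hg.comp_stronglyMeasurable hq) (hf.sub hq_int)
      C hgq_bound
  have hsub : μ[f - q | m] =ᵐ[μ] μ[f | m] - q := by
    simpa only [condExp_of_stronglyMeasurable hm hq hq_int] using condExp_sub hf hq_int m
  refine hpull.trans ?_
  filter_upwards [hsub] with ω h_sub
  rw [Pi.mul_apply, h_sub, Pi.sub_apply]

end

theorem phi_first_order_general
    {Ω : Type*} [MeasurableSpace Ω] (μ : Measure Ω) [IsProbabilityMeasure μ]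
    (T d : ℕ)
    (X : ℕ → Ω → (Fin d → ℝ)) (A : ℕ → Ω → Bool)
    (hX : ∀ t, Measurable (X t)) (hA : ∀ t, Measurable (A t))
    (a : ℕ → Bool)
    (s : ℕ → ℝ → ℝ) (hs : ∀ t, ContDiff ℝ 2 (s t))
    (H : ℕ → MeasurableSpace Ω)
    (hH : H = fun t =>
      (⨆ u ∈ Finset.range (t+1), MeasurableSpace.comap (X u) inferInstance)
        ⊔ (⨆ u ∈ Finset.range t, MeasurableSpace.comap (A u) inferInstance))
    (p : ℕ → Bool → Ω → ℝ)
    (hp : p = fun t b => μ[(fun ω => if A t ω = b then (1:ℝ) else 0) | H t])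
    (φt : ℕ → Bool → Ω → ℝ)
    (hφt : φt = fun t b ω => (if b = a t then (1:ℝ) else -1)
      * ((if A t ω = a t then (1:ℝ) else 0) - p t (a t) ω)
      * (1 - s t (p t (a t) ω) + deriv (s t) (p t (a t) ω) * (1 - p t (a t) ω)))
    (phat : ℕ → Ω → ℝ)
    (hphatmeas : ∀ t, Measurable[H t] (phat t))
    (hphat01 : ∀ t ω, phat t ω ∈ Set.Ioo (0:ℝ) 1)
    (φth : ℕ → Bool → Ω → ℝ)
    (hφth : φth = fun t b ω => (if b = a t then (1:ℝ) else -1)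
      * ((if A t ω = a t then (1:ℝ) else 0) - phat t ω)
      * (1 - s t (phat t ω) + deriv (s t) (phat t ω) * (1 - phat t ω))) :
    (∀ t < T, ∀ b : Bool, μ[φt t b | H t] =ᵐ[μ] fun _ => (0:ℝ))
    ∧ (∀ t < T, ∀ b : Bool,
        μ[φth t b | H t] =ᵐ[μ] fun ω => (if b = a t then (1:ℝ) else -1)
          * (p t (a t) ω - phat t ω)
          * (1 - s t (phat t ω) + deriv (s t) (phat t ω) * (1 - phat t ω))) := by
  have hm : ∀ t, H t ≤ ‹MeasurableSpace Ω› := fun t => hH ▸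
    sup_le (iSup₂_le fun u _ => (hX u).comap_le) (iSup₂_le fun u _ => (hA u).comap_le)
  set I : ℕ → Ω → ℝ := fun t ω => if A t ω = a t then 1 else 0
  have hI_bound : ∀ t ω, |I t ω| ≤ 1 := fun t ω => by dsimp only [I]; split_ifs <;> simp
  have hI_int : ∀ t, Integrable (I t) μ := fun t =>
    .of_bound (Measurable.ite (hA t (measurableSet_singleton _)) measurable_const
      measurable_const).aestronglyMeasurable 1 (.of_forall (hI_bound t))
  have hp_def : ∀ t, p t (a t) = μ[I t | H t] := fun t => by rw [hp]
  set g : ℕ → Bool → ℝ → ℝ := fun t b x =>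
    (if b = a t then 1 else -1) * (1 - s t x + deriv (s t) x * (1 - x))
  have hg : ∀ t b, Continuous (g t b) := fun t b =>
    continuous_const.mul ((continuous_const.sub (hs t).continuous).add
      (((hs t).continuous_deriv one_le_two).mul (continuous_const.sub continuous_id)))
  refine ⟨fun t _ b => ?_, fun t _ b => ?_⟩
  · have hφ : φt t b = fun ω => g t b (p t (a t) ω) * (I t ω - p t (a t) ω) := by
      rw [hφt]; funext ω; ring
    have hp_bound : ∀ᵐ ω ∂μ, |p t (a t) ω| ≤ 1 := by
      simpa [hp_def] using ae_bdd_abs_condExp_of_ae_bdd_abs (m := H t) (.of_forall (hI_bound t))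
    refine (hφ ▸ condExp_comp_mul_sub (hm t) (hg t b) (hI_int t)
      (hp_def t ▸ stronglyMeasurable_condExp) hp_bound).trans ?_
    simp [hp_def]
  · have hφ : φth t b = fun ω => g t b (phat t ω) * (I t ω - phat t ω) := by
      rw [hφth]; funext ω; ring
    have hphat_bound : ∀ᵐ ω ∂μ, |phat t ω| ≤ 1 := .of_forall fun ω =>
      abs_le.mpr ⟨by linarith [(hphat01 t ω).1], (hphat01 t ω).2.le⟩
    refine (hφ ▸ condExp_comp_mul_sub (hm t) (hg t b) (hI_int t)
      (hphatmeas t).stronglyMeasurable hphat_bound).trans (.of_eq ?_)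
    funext ω; rw [← hp_def]; ring

/-- **Conditional means of the weight influence function (Lemma phi-first-order).**
(i) `E[φ_t(b; A_t, H_t) | H_t] = 0` a.s.; (ii) with an estimated conditional probability
`p̂ t` (an `H_t`-measurable function with values in `(0,1)`) substituted into the formula
for `φ_t`, `E[φ̂_t(b; A_t, H_t) | H_t]` equals
`(2·1{b = a_t} - 1)·(P(A_t = a_t|H_t) - p̂)·[1 - s_t(p̂) + s_t'(p̂)(1 - p̂)]` a.s.
Times `1,…,T` of the paper are indexed by `0,…,T-1`. -/
theorem phi_first_order
    {Ω : Type*} [MeasurableSpace Ω] (μ : Measure Ω) [IsProbabilityMeasure μ]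
    (T d : ℕ) (hT : 1 ≤ T)
    (X : ℕ → Ω → (Fin d → ℝ)) (A : ℕ → Ω → Bool) (Y : Ω → ℝ)
    (hX : ∀ t, Measurable (X t)) (hA : ∀ t, Measurable (A t))
    (hY : MemLp Y 2 μ)
    (a : ℕ → Bool)
    (s : ℕ → ℝ → ℝ) (hs : ∀ t, ContDiff ℝ 2 (s t))
    (hsbdd : ∃ K, ∀ t x, |deriv (s t) x| ≤ K ∧ |deriv (deriv (s t)) x| ≤ K)
    (hs01 : ∀ t, ∀ x ∈ Set.Icc (0:ℝ) 1, s t x ∈ Set.Icc (0:ℝ) 1)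
    (H : ℕ → MeasurableSpace Ω)
    (hH : H = fun t =>
      (⨆ u ∈ Finset.range (t+1), MeasurableSpace.comap (X u) inferInstance)
        ⊔ (⨆ u ∈ Finset.range t, MeasurableSpace.comap (A u) inferInstance))
    (p : ℕ → Bool → Ω → ℝ)
    (hp : p = fun t b => μ[(fun ω => if A t ω = b then (1:ℝ) else 0) | H t])
    (φt : ℕ → Bool → Ω → ℝ)
    (hφt : φt = fun t b ω => (if b = a t then (1:ℝ) else -1)
      * ((if A t ω = a t then (1:ℝ) else 0) - p t (a t) ω)
      * (1 - s t (p t (a t) ω) + deriv (s t) (p t (a t) ω) * (1 - p t (a t) ω)))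
    (phat : ℕ → Ω → ℝ)
    (hphatmeas : ∀ t, Measurable[H t] (phat t))
    (hphat01 : ∀ t ω, phat t ω ∈ Set.Ioo (0:ℝ) 1)
    (φth : ℕ → Bool → Ω → ℝ)
    (hφth : φth = fun t b ω => (if b = a t then (1:ℝ) else -1)
      * ((if A t ω = a t then (1:ℝ) else 0) - phat t ω)
      * (1 - s t (phat t ω) + deriv (s t) (phat t ω) * (1 - phat t ω))) :
    (∀ t < T, ∀ b : Bool, μ[φt t b | H t] =ᵐ[μ] fun _ => (0:ℝ))
    ∧ (∀ t < T, ∀ b : Bool,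
        μ[φth t b | H t] =ᵐ[μ] fun ω => (if b = a t then (1:ℝ) else -1)
          * (p t (a t) ω - phat t ω)
          * (1 - s t (phat t ω) + deriv (s t) (phat t ω) * (1 - phat t ω))) :=
  phi_first_order_general μ T d X A hX hA a s hs H hH p hp φt hφt phat hphatmeas hphat01 φth hφth
end

section
/- Exact second-order identity for the estimated intervention propensity score (content of Lemma phi-second-order): Let p = P(A_t = a_t | H_t) and let p̂ = P̂(A_t = a_t | H_t) be an estimated conditional probability (a measurable function of H_t with values in (0,1)); let Q̂_t and φ̂_t be defined by substituting p̂ for p in the formulas for Q_t and φ_t. Then for every b ∈ {0,1}, almost surely E[ φ̂_t(b; A_t, H_t) + Q̂_t(b | H_t) − Q_t(b | H_t) | H_t ] = (2·1{b = a_t} − 1)·[ (1 − p̂)·( s_t′(p̂)·(p − p̂) + s_t(p̂) − s_t(p) ) + ( s_t(p̂) − s_t(p) )·(p̂ − p) ]. -/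
open MeasureTheory ProbabilityTheory

/-! Up to the sign `c = ±1`, `φ̂_t + Q̂_t - Q_t` is an `H_t`-measurable function plus
`c·g(p̂)·1{A_t = a_t}`, where `g(x) = 1 - s(x) + s'(x)(1 - x)`. Pulling the `H_t`-measurable
factor out of the conditional expectation replaces the indicator by `p`, and
`P(A_t = b | H_t) = 1 - p` for `b ≠ a_t`; what remains is the polynomial identity
`(p - p̂) g(p̂) + (p̂ - p) + s(p̂)(1 - p̂) - s(p)(1 - p) = (1 - p̂) s'(p̂)(p - p̂) + (s(p̂) - s(p))(1 - p)`.
Integrability comes from continuity of `s` and `s'` on the compact range `[0,1]`. -/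

open Set

section Bounds

variable {Ω E F : Type*} [MeasurableSpace Ω] {μ : Measure Ω} [TopologicalSpace E]
  [NormedAddCommGroup F] {K : Set E} {Φ : E → F} {X : Ω → E}

theorem exists_ae_norm_comp_le_of_isCompact (hK : IsCompact K) (hΦ : ContinuousOn Φ K)
    (hX : ∀ᵐ ω ∂μ, X ω ∈ K) : ∃ C, ∀ᵐ ω ∂μ, ‖Φ (X ω)‖ ≤ C := by
  obtain ⟨C, hC⟩ := hK.exists_bound_of_continuousOn hΦ
  exact ⟨C, hX.mono fun ω hω => hC _ hω⟩

theorem integrable_comp_of_ae_mem_isCompact [IsFiniteMeasure μ] (hK : IsCompact K)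
    (hΦ : Continuous Φ) (hXm : AEStronglyMeasurable X μ) (hX : ∀ᵐ ω ∂μ, X ω ∈ K) :
    Integrable (fun ω => Φ (X ω)) μ :=
  let ⟨C, hC⟩ := exists_ae_norm_comp_le_of_isCompact hK hΦ.continuousOn hX
  .of_bound (hΦ.comp_aestronglyMeasurable hXm) C hC

end Bounds

section ConditionalExpectation

variable {Ω : Type*} {m mΩ : MeasurableSpace Ω} {μ : Measure Ω} [IsFiniteMeasure μ]

theorem integrable_ite_eq_one_zero {α : Type*} [MeasurableSpace α]
    [MeasurableSingletonClass α] [DecidableEq α] {A : Ω → α} (hA : Measurable A) (a : α) :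
    Integrable (fun ω => if A ω = a then (1 : ℝ) else 0) μ := by
  refine .of_bound (Measurable.ite (hA (measurableSet_singleton a)) measurable_const
    measurable_const).aestronglyMeasurable 1 (ae_of_all _ fun ω => ?_)
  split_ifs <;> simp

theorem condExp_mem_Icc_of_ae_mem_Icc (hm : m ≤ mΩ) {Y : Ω → ℝ} (hY : Integrable Y μ)
    {lo hi : ℝ} (h : ∀ᵐ ω ∂μ, Y ω ∈ Icc lo hi) : ∀ᵐ ω ∂μ, μ[Y | m] ω ∈ Icc lo hi := by
  have hlo := condExp_mono (m := m) (integrable_const lo) hY (h.mono fun _ hω => hω.1)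
  have hhi := condExp_mono (m := m) hY (integrable_const hi) (h.mono fun _ hω => hω.2)
  rw [condExp_const hm] at hlo hhi
  filter_upwards [hlo, hhi] with ω hlo hhi using ⟨hlo, hhi⟩

theorem condExp_ite_eq_ne (hm : m ≤ mΩ) {A : Ω → Bool} (hA : Measurable A) {a b : Bool}
    (hb : b ≠ a) :
    μ[fun ω => if A ω = b then (1 : ℝ) else 0 | m]
      =ᵐ[μ] fun ω => 1 - μ[fun ω => if A ω = a then (1 : ℝ) else 0 | m] ω := by
  have hcompl : (fun ω => if A ω = b then (1 : ℝ) else 0)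
      = (fun _ => 1) - fun ω => if A ω = a then (1 : ℝ) else 0 := by
    funext ω
    rw [Pi.sub_apply]
    generalize A ω = x
    cases a <;> cases b <;> cases x <;> simp at hb ⊢
  rw [hcompl]
  refine (condExp_sub (integrable_const 1) (integrable_ite_eq_one_zero hA a) m).trans ?_
  rw [condExp_const hm]
  rfl

theorem condExp_mul_add_of_stronglyMeasurable (hm : m ≤ mΩ) {F Y G : Ω → ℝ}
    (hF : StronglyMeasurable[m] F) {C : ℝ} (hFC : ∀ᵐ ω ∂μ, ‖F ω‖ ≤ C) (hY : Integrable Y μ)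
    (hG : StronglyMeasurable[m] G) (hGi : Integrable G μ) :
    μ[F * Y + G | m] =ᵐ[μ] F * μ[Y | m] + G := by
  have hFY : Integrable (F * Y) μ := hY.bdd_mul (hF.mono hm).aestronglyMeasurable hFC
  calc μ[F * Y + G | m] =ᵐ[μ] μ[F * Y | m] + μ[G | m] := condExp_add hFY hGi m
    _ =ᵐ[μ] F * μ[Y | m] + G :=
      (condExp_stronglyMeasurable_mul_of_bound hm hF hY C hFC).add
        (condExp_of_stronglyMeasurable hm hG hGi).eventuallyEq

theorem condExp_mul_add_of_continuous_comp (hm : m ≤ mΩ) {E : Type*} [TopologicalSpace E]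
    {K : Set E} (hK : IsCompact K) {ψ : E → ℝ} (hψ : Continuous ψ) {Φ : E × ℝ → ℝ}
    (hΦ : Continuous Φ) {Z : Ω → E} (hZ : StronglyMeasurable[m] Z) (hZK : ∀ᵐ ω ∂μ, Z ω ∈ K)
    {Y : Ω → ℝ} (hY : Integrable Y μ) {lo hi : ℝ} (hYI : ∀ᵐ ω ∂μ, Y ω ∈ Icc lo hi) :
    μ[fun ω => ψ (Z ω) * Y ω + Φ (Z ω, μ[Y | m] ω) | m]
      =ᵐ[μ] fun ω => ψ (Z ω) * μ[Y | m] ω + Φ (Z ω, μ[Y | m] ω) := by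
  have hZY : StronglyMeasurable[m] fun ω => (Z ω, μ[Y | m] ω) :=
    hZ.prodMk stronglyMeasurable_condExp
  have hZYK : ∀ᵐ ω ∂μ, (Z ω, μ[Y | m] ω) ∈ K ×ˢ Icc lo hi := by
    filter_upwards [hZK, condExp_mem_Icc_of_ae_mem_Icc hm hY hYI] with ω hZ hY using ⟨hZ, hY⟩
  obtain ⟨C, hC⟩ := exists_ae_norm_comp_le_of_isCompact hK hψ.continuousOn hZK
  exact condExp_mul_add_of_stronglyMeasurable hm (hψ.comp_stronglyMeasurable hZ) hC hY
    (hΦ.comp_stronglyMeasurable hZY) (integrable_comp_of_ae_mem_isCompact (hK.prod isCompact_Icc)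
      hΦ (hZY.mono hm).aestronglyMeasurable hZYK)

end ConditionalExpectation

theorem phi_second_order_general
    {Ω : Type*} [MeasurableSpace Ω] (μ : Measure Ω) [IsProbabilityMeasure μ]
    (T d : ℕ)
    (X : ℕ → Ω → (Fin d → ℝ)) (A : ℕ → Ω → Bool)
    (hX : ∀ t, Measurable (X t)) (hA : ∀ t, Measurable (A t))
    (a : ℕ → Bool)
    (s : ℕ → ℝ → ℝ) (hs : ∀ t, ContDiff ℝ 2 (s t))
    (H : ℕ → MeasurableSpace Ω)
    (hH : H = fun t =>
      (⨆ u ∈ Finset.range (t+1), MeasurableSpace.comap (X u) inferInstance)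
        ⊔ (⨆ u ∈ Finset.range t, MeasurableSpace.comap (A u) inferInstance))
    (p : ℕ → Bool → Ω → ℝ)
    (hp : p = fun t b => μ[(fun ω => if A t ω = b then (1:ℝ) else 0) | H t])
    (Q : ℕ → Bool → Ω → ℝ)
    (hQ : Q = fun t b ω => p t b ω
      + (if b = a t then (1:ℝ) else -1) * s t (p t (a t) ω) * (1 - p t (a t) ω))
    (phat : ℕ → Ω → ℝ)
    (hphatmeas : ∀ t, Measurable[H t] (phat t))
    (hphat01 : ∀ t ω, phat t ω ∈ Set.Ioo (0:ℝ) 1)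
    (phatb : ℕ → Bool → Ω → ℝ)
    (hphatb : phatb = fun t b ω => if b = a t then phat t ω else 1 - phat t ω)
    (Qhat : ℕ → Bool → Ω → ℝ)
    (hQhat : Qhat = fun t b ω => phatb t b ω
      + (if b = a t then (1:ℝ) else -1) * s t (phat t ω) * (1 - phat t ω))
    (φth : ℕ → Bool → Ω → ℝ)
    (hφth : φth = fun t b ω => (if b = a t then (1:ℝ) else -1)
      * ((if A t ω = a t then (1:ℝ) else 0) - phat t ω)
      * (1 - s t (phat t ω) + deriv (s t) (phat t ω) * (1 - phat t ω))) :
    ∀ t < T, ∀ b : Bool,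
      μ[(fun ω => φth t b ω + Qhat t b ω - Q t b ω) | H t]
        =ᵐ[μ] fun ω => (if b = a t then (1:ℝ) else -1)
          * ((1 - phat t ω)
              * (deriv (s t) (phat t ω) * (p t (a t) ω - phat t ω)
                  + s t (phat t ω) - s t (p t (a t) ω))
            + (s t (phat t ω) - s t (p t (a t) ω)) * (phat t ω - p t (a t) ω)) := by
  intro t _ b
  have hm : H t ≤ ‹MeasurableSpace Ω› := by
    rw [hH]
    exact sup_le (iSup₂_le fun u _ => (hX u).comap_le) (iSup₂_le fun u _ => (hA u).comap_le)
  set I : Ω → ℝ := fun ω => if A t ω = a t then 1 else 0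
  set c : ℝ := if b = a t then 1 else -1
  set β : ℝ := if b = a t then 0 else 1
  have hP : p t (a t) = μ[I | H t] := by rw [hp]
  have hI : ∀ᵐ ω ∂μ, I ω ∈ Icc (0 : ℝ) 1 := ae_of_all _ fun ω => by
    simp only [I]; split_ifs <;> simp
  have hpb : p t b =ᵐ[μ] fun ω => β + c * p t (a t) ω := by
    by_cases hb : b = a t
    · simp [hb, β, c]
    · simpa [hb, β, c, hp, sub_eq_add_neg] using condExp_ite_eq_ne hm (hA t) hb
  have hsc : Continuous (s t) := (hs t).continuous
  have hs'c : Continuous (deriv (s t)) := (hs t).continuous_deriv one_le_two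
  set ψ : ℝ → ℝ := fun x => c * (1 - s t x + deriv (s t) x * (1 - x))
  set Φ : ℝ × ℝ → ℝ := fun z =>
    c * (z.1 - z.2) - z.1 * ψ z.1 + c * (s t z.1 * (1 - z.1) - s t z.2 * (1 - z.2))
  have hdecomp : (fun ω => φth t b ω + Qhat t b ω - Q t b ω)
      =ᵐ[μ] fun ω => ψ (phat t ω) * I ω + Φ (phat t ω, p t (a t) ω) := by
    filter_upwards [hpb] with ω hω
    simp only [hφth, hQhat, hQ, hphatb, hω, I, ψ, Φ, c, β]
    split_ifs <;> ring
  refine (condExp_congr_ae hdecomp).trans ?_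
  rw [hP]
  refine (condExp_mul_add_of_continuous_comp hm isCompact_Icc (by fun_prop) (by fun_prop)
    (hphatmeas t).stronglyMeasurable (ae_of_all _ fun ω => Ioo_subset_Icc_self (hphat01 t ω))
    (integrable_ite_eq_one_zero (hA t) (a t)) hI).trans (ae_of_all _ fun ω => ?_)
  simp only [ψ, Φ]
  ring

/-- **Exact second-order identity for the estimated intervention propensity score
(Lemma phi-second-order).**  With `p = P(A_t = a_t | H_t)` and an estimated conditional
probability `p̂` (`H_t`-measurable, values in `(0,1)`) substituted into the formulas for
`Q_t` and `φ_t`, for every `b`: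
`E[φ̂_t(b) + Q̂_t(b|H_t) - Q_t(b|H_t) | H_t]
  = (2·1{b=a_t}-1)·[(1-p̂)(s_t'(p̂)(p-p̂) + s_t(p̂) - s_t(p)) + (s_t(p̂)-s_t(p))(p̂-p)]` a.s.
Times `1,…,T` of the paper are indexed by `0,…,T-1`.  The estimated probability of
treatment `b` is `p̂` if `b = a_t` and `1 - p̂` otherwise. -/
theorem phi_second_order
    {Ω : Type*} [MeasurableSpace Ω] (μ : Measure Ω) [IsProbabilityMeasure μ]
    (T d : ℕ) (hT : 1 ≤ T)
    (X : ℕ → Ω → (Fin d → ℝ)) (A : ℕ → Ω → Bool)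
    (hX : ∀ t, Measurable (X t)) (hA : ∀ t, Measurable (A t))
    (a : ℕ → Bool)
    (s : ℕ → ℝ → ℝ) (hs : ∀ t, ContDiff ℝ 2 (s t))
    (hsbdd : ∃ K, ∀ t x, |deriv (s t) x| ≤ K ∧ |deriv (deriv (s t)) x| ≤ K)
    (hs01 : ∀ t, ∀ x ∈ Set.Icc (0:ℝ) 1, s t x ∈ Set.Icc (0:ℝ) 1)
    (H : ℕ → MeasurableSpace Ω)
    (hH : H = fun t =>
      (⨆ u ∈ Finset.range (t+1), MeasurableSpace.comap (X u) inferInstance)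
        ⊔ (⨆ u ∈ Finset.range t, MeasurableSpace.comap (A u) inferInstance))
    (p : ℕ → Bool → Ω → ℝ)
    (hp : p = fun t b => μ[(fun ω => if A t ω = b then (1:ℝ) else 0) | H t])
    (Q : ℕ → Bool → Ω → ℝ)
    (hQ : Q = fun t b ω => p t b ω
      + (if b = a t then (1:ℝ) else -1) * s t (p t (a t) ω) * (1 - p t (a t) ω))
    (phat : ℕ → Ω → ℝ)
    (hphatmeas : ∀ t, Measurable[H t] (phat t))
    (hphat01 : ∀ t ω, phat t ω ∈ Set.Ioo (0:ℝ) 1)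
    (phatb : ℕ → Bool → Ω → ℝ)
    (hphatb : phatb = fun t b ω => if b = a t then phat t ω else 1 - phat t ω)
    (Qhat : ℕ → Bool → Ω → ℝ)
    (hQhat : Qhat = fun t b ω => phatb t b ω
      + (if b = a t then (1:ℝ) else -1) * s t (phat t ω) * (1 - phat t ω))
    (φth : ℕ → Bool → Ω → ℝ)
    (hφth : φth = fun t b ω => (if b = a t then (1:ℝ) else -1)
      * ((if A t ω = a t then (1:ℝ) else 0) - phat t ω)
      * (1 - s t (phat t ω) + deriv (s t) (phat t ω) * (1 - phat t ω))) :
    ∀ t < T, ∀ b : Bool,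
      μ[(fun ω => φth t b ω + Qhat t b ω - Q t b ω) | H t]
        =ᵐ[μ] fun ω => (if b = a t then (1:ℝ) else -1)
          * ((1 - phat t ω)
              * (deriv (s t) (phat t ω) * (p t (a t) ω - phat t ω)
                  + s t (phat t ω) - s t (p t (a t) ω))
            + (s t (phat t ω) - s t (p t (a t) ω)) * (phat t ω - p t (a t) ω)) :=
  phi_second_order_general μ T d X A hX hA a s hs H hH p hp Q hQ phat hphatmeas hphat01 phatb hphatb
    Qhat hQhat φth hφth
end

section
/- Backwards-in-time error decomposition of the weight component: E[φ̂_Q(Z)] = Σ_{t=1}^{T} E[ ( ∏_{s=1}^{t−1} r̂_s(A_s | H_s) − ∏_{s=1}^{t−1} r_s(A_s | H_s) )·Σ_{b∈{0,1}} m̂_t(b, H_t)·E(φ̂_t(b; A_t, H_t) | H_t) ] + Σ_{t=1}^{T} E[ ( ∏_{s=1}^{t−1} r_s(A_s | H_s) )·Σ_{b} m̂_t(b, H_t)·( E(φ̂_t(b; A_t, H_t) | H_t) + Q̂_t(b | H_t) − Q_t(b | H_t) ) ] + Σ_{t=1}^{T} E[ ( ∏_{s=1}^{t−1} r_s(A_s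 | H_s) )·Σ_{b} m̂_t(b, H_t)·( Q_t(b | H_t) − Q̂_t(b | H_t) ) ]. -/
/-!
The weight `∏_{u<t} r̂_u` and the regression `m̂_t` are `H_t`-measurable and bounded, so by the
tower property `φ̂_t` may be replaced by `E(φ̂_t | H_t)` in every summand of `E[φ̂_Q]`. What is
left is a pointwise identity: in the three integrands the `Q̂_t - Q_t` terms cancel and
`∏ r̂ - ∏ r` recombines with `∏ r` into `∏ r̂`. All functions involved are essentially bounded on
a probability space, so every integral may be split.
-/

open MeasureTheory ProbabilityTheory
open scoped ENNReal

section Tower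

variable {Ω ι : Type*} {m m₀ : MeasurableSpace Ω} {μ : Measure Ω}

lemma integrable_mul_sum_mul [Fintype ι] {W : Ω → ℝ} {M f : ι → Ω → ℝ} (hW : MemLp W ∞ μ)
    (hM : ∀ b, MemLp (M b) ∞ μ) (hf : ∀ b, Integrable (f b) μ) :
    Integrable (fun ω => W ω * ∑ b, M b ω * f b ω) μ :=
  (integrable_finsetSum _ fun b _ => (hf b).mul_of_top_right (hM b)).mul_of_top_right hW

lemma integral_mul_condExp_of_memLp_top [IsFiniteMeasure μ] (hm : m ≤ m₀) {W f : Ω → ℝ}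
    (hW_meas : StronglyMeasurable[m] W) (hW : MemLp W ∞ μ) (hf : Integrable f μ) :
    ∫ ω, W ω * μ[f|m] ω ∂μ = ∫ ω, W ω * f ω ∂μ :=
  calc ∫ ω, W ω * μ[f|m] ω ∂μ = ∫ ω, μ[W * f|m] ω ∂μ :=
        integral_congr_ae
          (condExp_mul_of_stronglyMeasurable_left hW_meas (hf.mul_of_top_right hW) hf).symm
    _ = ∫ ω, W ω * f ω ∂μ := integral_condExp hm

lemma integral_mul_sum_eq_decomposition [Fintype ι] [IsFiniteMeasure μ] (hm : m ≤ m₀)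
    {Rhat R : Ω → ℝ} {M Φ F G : ι → Ω → ℝ}
    (hRhat_meas : StronglyMeasurable[m] Rhat) (hRhat : MemLp Rhat ∞ μ) (hR : MemLp R ∞ μ)
    (hM_meas : ∀ b, StronglyMeasurable[m] (M b)) (hM : ∀ b, MemLp (M b) ∞ μ)
    (hΦ : ∀ b, Integrable (Φ b) μ) (hF : ∀ b, Integrable (F b) μ) (hG : ∀ b, Integrable (G b) μ) :
    ∫ ω, Rhat ω * ∑ b, M b ω * Φ b ω ∂μ
      = ∫ ω, (Rhat ω - R ω) * ∑ b, M b ω * μ[Φ b|m] ω ∂μ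
        + ∫ ω, R ω * ∑ b, M b ω * (μ[Φ b|m] ω + F b ω - G b ω) ∂μ
        + ∫ ω, R ω * ∑ b, M b ω * (G b ω - F b ω) ∂μ := by
  have hCE : ∀ b, Integrable (μ[Φ b|m]) μ := fun b => integrable_condExp
  have hW : ∀ b, MemLp (fun ω => Rhat ω * M b ω) ∞ μ := fun b => (hM b).mul' hRhat
  have hterm : ∀ f : ι → Ω → ℝ, (∀ b, Integrable (f b) μ) →
      ∀ b, Integrable (fun ω => Rhat ω * M b ω * f b ω) μ :=
    fun f hf b => (hf b).mul_of_top_right (hW b)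
  have tower : ∫ ω, Rhat ω * ∑ b, M b ω * Φ b ω ∂μ
      = ∫ ω, Rhat ω * ∑ b, M b ω * μ[Φ b|m] ω ∂μ := by
    simp only [Finset.mul_sum, ← mul_assoc]
    rw [integral_finsetSum _ fun b _ => hterm Φ hΦ b,
      integral_finsetSum _ fun b _ => hterm _ hCE b]
    exact Finset.sum_congr rfl fun b _ => (integral_mul_condExp_of_memLp_top hm
      (hRhat_meas.mul (hM_meas b)) (hW b) (hΦ b)).symm
  have h₁ := integrable_mul_sum_mul (hRhat.sub hR) hM hCE
  have h₂ := integrable_mul_sum_mul hR hM fun b => ((hCE b).add (hF b)).sub (hG b)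
  have h₃ := integrable_mul_sum_mul hR hM fun b => (hG b).sub (hF b)
  rw [tower, ← integral_add (by exact h₁) (by exact h₂),
    ← integral_add (by exact h₁.add h₂) (by exact h₃)]
  congr 1 with ω
  simp only [mul_add, mul_sub, Finset.sum_add_distrib, Finset.sum_sub_distrib]
  ring

lemma integral_sum_mul_sum_eq_decomposition [Fintype ι] [IsFiniteMeasure μ] {S : Finset ℕ}
    {H : ℕ → MeasurableSpace Ω} (hH : ∀ t, H t ≤ m₀) {Rhat R : ℕ → Ω → ℝ}
    {M Φ F G : ℕ → ι → Ω → ℝ}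
    (hRhat_meas : ∀ t ∈ S, StronglyMeasurable[H t] (Rhat t)) (hRhat : ∀ t ∈ S, MemLp (Rhat t) ∞ μ)
    (hR : ∀ t ∈ S, MemLp (R t) ∞ μ) (hM_meas : ∀ t ∈ S, ∀ b, StronglyMeasurable[H t] (M t b))
    (hM : ∀ t ∈ S, ∀ b, MemLp (M t b) ∞ μ) (hΦ : ∀ t b, Integrable (Φ t b) μ)
    (hF : ∀ t b, Integrable (F t b) μ) (hG : ∀ t b, Integrable (G t b) μ) :
    ∫ ω, ∑ t ∈ S, Rhat t ω * ∑ b, M t b ω * Φ t b ω ∂μ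
      = (∑ t ∈ S, ∫ ω, (Rhat t ω - R t ω) * ∑ b, M t b ω * μ[Φ t b|H t] ω ∂μ)
        + (∑ t ∈ S, ∫ ω, R t ω * ∑ b, M t b ω * (μ[Φ t b|H t] ω + F t b ω - G t b ω) ∂μ)
        + ∑ t ∈ S, ∫ ω, R t ω * ∑ b, M t b ω * (G t b ω - F t b ω) ∂μ := by
  rw [integral_finsetSum _ fun t ht => integrable_mul_sum_mul (hRhat t ht) (hM t ht) (hΦ t)]
  simp only [← Finset.sum_add_distrib]
  exact Finset.sum_congr rfl fun t ht => integral_mul_sum_eq_decomposition (hH t)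
    (hRhat_meas t ht) (hRhat t ht) (hR t ht) (hM_meas t ht) (hM t ht) (hΦ t) (hF t) (hG t)

end Tower

lemma memLp_top_finset_prod_of_bound {Ω ι : Type*} {m₀ : MeasurableSpace Ω} {μ : Measure Ω}
    {f : ι → Ω → ℝ} (s : Finset ι) (hf : AEStronglyMeasurable (fun ω => ∏ i ∈ s, f i ω) μ)
    (hbdd : ∃ K, ∀ i, ∀ᵐ ω ∂μ, |f i ω| ≤ K) : MemLp (fun ω => ∏ i ∈ s, f i ω) ∞ μ := by
  obtain ⟨K, hK⟩ := hbdd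
  refine memLp_top_of_bound hf (K ^ s.card) ?_
  filter_upwards [(Filter.eventually_all_finset s).2 fun i _ => hK i] with ω hω
  calc ‖∏ i ∈ s, f i ω‖ = ∏ i ∈ s, |f i ω| := by rw [Real.norm_eq_abs, Finset.abs_prod]
    _ ≤ ∏ _i ∈ s, K := Finset.prod_le_prod (fun i _ => abs_nonneg _) hω
    _ = K ^ s.card := Finset.prod_const K

section CondProb

variable {Ω β : Type*} {m m₀ : MeasurableSpace Ω} {μ : Measure Ω} [IsFiniteMeasure μ]

lemma ae_condExp_mem_Icc (hm : m ≤ m₀) {f : Ω → ℝ} {a b : ℝ} (hf_int : Integrable f μ)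
    (hf : ∀ᵐ ω ∂μ, f ω ∈ Set.Icc a b) : ∀ᵐ ω ∂μ, μ[f|m] ω ∈ Set.Icc a b := by
  have hlow := condExp_mono (m := m) (integrable_const a) hf_int (hf.mono fun _ h => h.1)
  have hupp := condExp_mono (m := m) hf_int (integrable_const b) (hf.mono fun _ h => h.2)
  rw [condExp_const hm] at hlow hupp
  filter_upwards [hlow, hupp] with ω h₁ h₂ using ⟨h₁, h₂⟩

lemma ae_condExp_ite_mem_Icc [MeasurableSpace β] [MeasurableSingletonClass β] [DecidableEq β]
    (hm : m ≤ m₀) {B : Ω → β} (hB : Measurable B) (b : β) :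
    ∀ᵐ ω ∂μ, μ[fun ω => if B ω = b then (1:ℝ) else 0|m] ω ∈ Set.Icc (0:ℝ) 1 := by
  have hmeas : Measurable fun ω => if B ω = b then (1:ℝ) else 0 :=
    Measurable.ite (hB (measurableSet_singleton b)) measurable_const measurable_const
  refine ae_condExp_mem_Icc hm (.of_bound hmeas.aestronglyMeasurable 1 (ae_of_all _ fun ω => ?_))
    (ae_of_all _ fun ω => ?_) <;> split <;> simp

end CondProb

section History

variable {Ω α β : Type*} [MeasurableSpace α] [MeasurableSpace β]

abbrev history (X : ℕ → Ω → α) (A : ℕ → Ω → β) (t : ℕ) : MeasurableSpace Ω :=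
  (⨆ u ∈ Finset.range (t+1), MeasurableSpace.comap (X u) inferInstance)
    ⊔ (⨆ u ∈ Finset.range t, MeasurableSpace.comap (A u) inferInstance)

lemma history_mono (X : ℕ → Ω → α) (A : ℕ → Ω → β) : Monotone (history X A) := fun t t' h =>
  sup_le_sup (biSup_mono fun u hu => by simp only [Finset.mem_range] at hu ⊢; omega)
    (biSup_mono fun u hu => by simp only [Finset.mem_range] at hu ⊢; omega)

lemma history_le [m₀ : MeasurableSpace Ω] {X : ℕ → Ω → α} {A : ℕ → Ω → β}
    (hX : ∀ t, Measurable (X t)) (hA : ∀ t, Measurable (A t)) (t : ℕ) : history X A t ≤ m₀ :=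
  sup_le (iSup₂_le fun u _ => (hX u).comap_le) (iSup₂_le fun u _ => (hA u).comap_le)

lemma measurable_history_of_lt {X : ℕ → Ω → α} {A : ℕ → Ω → β} {u t : ℕ} (h : u < t) :
    Measurable[history X A t] (A u) :=
  Measurable.of_comap_le (le_sup_of_le_right (le_iSup₂_of_le u (Finset.mem_range.2 h) le_rfl))

end History

lemma Measurable.select_bool {Ω β : Type*} {m : MeasurableSpace Ω} [MeasurableSpace β]
    {g : Bool → Ω → β} {B : Ω → Bool} (hB : Measurable[m] B) (hg : ∀ b, Measurable[m] (g b)) :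
    Measurable[m] fun ω => g (B ω) ω := by
  have hsplit : (fun ω => g (B ω) ω) = fun ω => if B ω = true then g true ω else g false ω := by
    funext ω; cases B ω <;> rfl
  rw [hsplit]
  exact Measurable.ite (hB (measurableSet_singleton true)) (hg true) (hg false)

lemma measurable_prod_ratio {Ω : Type*} {H : ℕ → MeasurableSpace Ω} (hH : Monotone H)
    {A : ℕ → Ω → Bool} (hA : ∀ t, ∀ u < t, Measurable[H t] (A u)) {q P : ℕ → Bool → Ω → ℝ}
    (hq : ∀ u b, Measurable[H u] (q u b)) (hP : ∀ u b, Measurable[H u] (P u b)) (t : ℕ) :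
    Measurable[H t] fun ω => ∏ u ∈ Finset.range t, q u (A u ω) ω / P u (A u ω) ω :=
  Finset.measurable_prod _ fun u hu =>
    have hu : u < t := Finset.mem_range.1 hu
    Measurable.select_bool (g := fun b ω => q u b ω / P u b ω) (hA t u hu)
      fun b => ((hq u b).div (hP u b)).mono (hH hu.le) le_rfl

lemma abs_sign_le_one (P : Prop) [Decidable P] : |(if P then (1:ℝ) else -1)| ≤ 1 := by
  split <;> simp

lemma abs_add_mul_mul_one_sub_le_two {c x y v : ℝ} (hc : |c| ≤ 1) (hx : x ∈ Set.Icc (0:ℝ) 1)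
    (hy : y ∈ Set.Icc (0:ℝ) 1) (hv : v ∈ Set.Icc (0:ℝ) 1) : |x + c * v * (1 - y)| ≤ 2 := by
  have hcvy : |c * v * (1 - y)| ≤ 1 := by
    rw [abs_mul, abs_mul, abs_of_nonneg hv.1, abs_of_nonneg (sub_nonneg.2 hy.2)]
    exact mul_le_one₀ (mul_le_one₀ hc hv.1 hv.2) (sub_nonneg.2 hy.2) (by linarith [hy.1])
  calc |x + c * v * (1 - y)| ≤ |x| + |c * v * (1 - y)| := abs_add_le _ _
    _ ≤ 1 + 1 := add_le_add (abs_le.2 ⟨by linarith [hx.1], hx.2⟩) hcvy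
    _ = 2 := one_add_one_eq_two

lemma abs_mul_sub_mul_add_le {c i y v d K : ℝ} (hc : |c| ≤ 1) (hi : i ∈ Set.Icc (0:ℝ) 1)
    (hy : y ∈ Set.Icc (0:ℝ) 1) (hv : v ∈ Set.Icc (0:ℝ) 1) (hd : |d| ≤ K) :
    |c * (i - y) * (1 - v + d * (1 - y))| ≤ 1 + K := by
  obtain ⟨hi₀, hi₁⟩ := hi; obtain ⟨hy₀, hy₁⟩ := hy; obtain ⟨hv₀, hv₁⟩ := hv
  have h₁ : |c * (i - y)| ≤ 1 := by
    rw [abs_mul]; exact mul_le_one₀ hc (abs_nonneg _) (abs_le.2 ⟨by linarith, by linarith⟩)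
  have h₂ : |1 - v + d * (1 - y)| ≤ 1 + K :=
    calc |1 - v + d * (1 - y)| ≤ |1 - v| + |d| * |1 - y| := by
          rw [← abs_mul]; exact abs_add_le _ _
      _ ≤ 1 + K * 1 := add_le_add (abs_le.2 ⟨by linarith, by linarith⟩)
          (mul_le_mul hd (abs_le.2 ⟨by linarith, by linarith⟩) (abs_nonneg _)
            ((abs_nonneg d).trans hd))
      _ = 1 + K := by rw [mul_one]
  calc |c * (i - y) * (1 - v + d * (1 - y))| = |c * (i - y)| * |1 - v + d * (1 - y)| :=
        abs_mul _ _
    _ ≤ 1 * (1 + K) := mul_le_mul h₁ h₂ (abs_nonneg _) zero_le_one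
    _ = 1 + K := one_mul _

section BinaryPropensity

variable {Ω : Type*} {π : Ω → ℝ}

def binaryPropensity (π : Ω → ℝ) (b : Bool) (ω : Ω) : ℝ :=
  if b then π ω else 1 - π ω

lemma Measurable.binaryPropensity {m : MeasurableSpace Ω} (hπ : Measurable[m] π) (b : Bool) :
    Measurable[m] (binaryPropensity π b) := by
  unfold _root_.binaryPropensity
  cases b <;> simp only [Bool.false_eq_true, if_true, if_false] <;> fun_prop

lemma binaryPropensity_mem_Icc (hπ : ∀ ω, π ω ∈ Set.Ioo (0:ℝ) 1) (b : Bool) (ω : Ω) :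
    binaryPropensity π b ω ∈ Set.Icc (0:ℝ) 1 := by
  obtain ⟨h₀, h₁⟩ := hπ ω
  cases b <;> simp only [binaryPropensity, Bool.false_eq_true, if_true, if_false] <;>
    constructor <;> linarith

end BinaryPropensity

section ShiftedPropensity

variable {Ω : Type*}

/-- The paper's `Q_t(b | H_t)`, for the propensity `P b = P(A_t = b | H_t)` and target `a = a_t`. -/
def shiftedPropensity (s : ℝ → ℝ) (a : Bool) (P : Bool → Ω → ℝ) (b : Bool) (ω : Ω) : ℝ :=
  P b ω + (if b = a then (1:ℝ) else -1) * s (P a ω) * (1 - P a ω)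

/-- The paper's `φ_t(b; A_t, H_t)`, for `B = A_t` and `y = P(A_t = a_t | H_t)`. -/
noncomputable def shiftedPropensityInfluence (s : ℝ → ℝ) (a : Bool) (B : Ω → Bool) (y : Ω → ℝ)
    (b : Bool) (ω : Ω) : ℝ :=
  (if b = a then (1:ℝ) else -1) * ((if B ω = a then (1:ℝ) else 0) - y ω)
    * (1 - s (y ω) + deriv s (y ω) * (1 - y ω))

variable {s : ℝ → ℝ} {a : Bool}

lemma Measurable.shiftedPropensity {m : MeasurableSpace Ω} {P : Bool → Ω → ℝ} (hs : Measurable s)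
    (hP : ∀ b, Measurable[m] (P b)) (b : Bool) : Measurable[m] (shiftedPropensity s a P b) := by
  unfold _root_.shiftedPropensity; fun_prop

variable {m₀ : MeasurableSpace Ω} {μ : Measure Ω} [IsFiniteMeasure μ]

lemma integrable_shiftedPropensity {P : Bool → Ω → ℝ} (hs : Measurable s)
    (hs01 : ∀ x ∈ Set.Icc (0:ℝ) 1, s x ∈ Set.Icc (0:ℝ) 1)
    (hP : ∀ b, Measurable (P b)) (hP01 : ∀ b, ∀ᵐ ω ∂μ, P b ω ∈ Set.Icc (0:ℝ) 1) (b : Bool) :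
    Integrable (shiftedPropensity s a P b) μ := by
  refine .of_bound (Measurable.shiftedPropensity hs hP b).aestronglyMeasurable 2 ?_
  filter_upwards [hP01 b, hP01 a] with ω hb ha
  exact abs_add_mul_mul_one_sub_le_two (abs_sign_le_one _) hb ha (hs01 _ ha)

lemma integrable_shiftedPropensityInfluence {B : Ω → Bool} {y : Ω → ℝ} {K : ℝ}
    (hs : Measurable s) (hs01 : ∀ x ∈ Set.Icc (0:ℝ) 1, s x ∈ Set.Icc (0:ℝ) 1)
    (hs' : ∀ x, |deriv s x| ≤ K) (hB : Measurable B) (hy : Measurable y)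
    (hy01 : ∀ ω, y ω ∈ Set.Icc (0:ℝ) 1) (b : Bool) :
    Integrable (shiftedPropensityInfluence s a B y b) μ := by
  have hind : Measurable fun ω => if B ω = a then (1:ℝ) else 0 :=
    Measurable.ite (hB (measurableSet_singleton a)) measurable_const measurable_const
  refine .of_bound (by unfold shiftedPropensityInfluence; fun_prop) (1 + K)
    (ae_of_all _ fun ω => ?_)
  exact abs_mul_sub_mul_add_le (abs_sign_le_one _) (by split <;> simp) (hy01 ω)
    (hs01 _ (hy01 ω)) (hs' _)

end ShiftedPropensity

/-- Times `1,…,T` of the paper are `0,…,T-1` here, so `∏_{s=1}^{t-1}` is a product over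
`Finset.range t`. -/
theorem backwards_in_time_Q_decomposition_general
    {Ω : Type*} [MeasurableSpace Ω] (μ : Measure Ω) [IsProbabilityMeasure μ]
    (T d : ℕ)
    (X : ℕ → Ω → (Fin d → ℝ)) (A : ℕ → Ω → Bool)
    (hX : ∀ t, Measurable (X t)) (hA : ∀ t, Measurable (A t))
    (a : ℕ → Bool)
    (s : ℕ → ℝ → ℝ) (hs : ∀ t, ContDiff ℝ 2 (s t))
    (hsbdd : ∃ K, ∀ t x, |deriv (s t) x| ≤ K ∧ |deriv (deriv (s t)) x| ≤ K)
    (hs01 : ∀ t, ∀ x ∈ Set.Icc (0:ℝ) 1, s t x ∈ Set.Icc (0:ℝ) 1)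
    (H : ℕ → MeasurableSpace Ω)
    (hH : H = fun t =>
      (⨆ u ∈ Finset.range (t+1), MeasurableSpace.comap (X u) inferInstance)
        ⊔ (⨆ u ∈ Finset.range t, MeasurableSpace.comap (A u) inferInstance))
    (p : ℕ → Bool → Ω → ℝ)
    (hp : p = fun t b => μ[(fun ω => if A t ω = b then (1:ℝ) else 0) | H t])
    (Q : ℕ → Bool → Ω → ℝ)
    (hQ : Q = fun t b ω => p t b ω
      + (if b = a t then (1:ℝ) else -1) * s t (p t (a t) ω) * (1 - p t (a t) ω))
    (r : ℕ → Ω → ℝ)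
    (hr : r = fun t ω => Q t (A t ω) ω / p t (A t ω) ω)
    (hrbdd : ∃ K, ∀ t, ∀ᵐ ω ∂μ, |r t ω| ≤ K)
    (pihat : ℕ → Ω → ℝ)
    (hpihatmeas : ∀ t, Measurable[H t] (pihat t))
    (hpihat01 : ∀ t ω, pihat t ω ∈ Set.Ioo (0:ℝ) 1)
    (phatb : ℕ → Bool → Ω → ℝ)
    (hphatb : phatb = fun t b ω => if b then pihat t ω else 1 - pihat t ω)
    (Qhat : ℕ → Bool → Ω → ℝ)
    (hQhat : Qhat = fun t b ω => phatb t b ω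
      + (if b = a t then (1:ℝ) else -1) * s t (phatb t (a t) ω) * (1 - phatb t (a t) ω))
    (rhat : ℕ → Ω → ℝ)
    (hrhat : rhat = fun t ω => Qhat t (A t ω) ω / phatb t (A t ω) ω)
    (hrhatbdd : ∃ K, ∀ t, ∀ᵐ ω ∂μ, |rhat t ω| ≤ K)
    (mhat : ℕ → Bool → Ω → ℝ)
    (hmhatmeas : ∀ t < T, ∀ b, Measurable[H t] (mhat t b))
    (hmhatbdd : ∃ C, ∀ t < T, ∀ b, ∀ᵐ ω ∂μ, |mhat t b ω| ≤ C)
    (φth : ℕ → Bool → Ω → ℝ)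
    (hφth : φth = fun t b ω => (if b = a t then (1:ℝ) else -1)
      * ((if A t ω = a t then (1:ℝ) else 0) - phatb t (a t) ω)
      * (1 - s t (phatb t (a t) ω)
          + deriv (s t) (phatb t (a t) ω) * (1 - phatb t (a t) ω)))
    (φQh : Ω → ℝ)
    (hφQh : φQh = fun ω => ∑ t ∈ Finset.range T, (∏ u ∈ Finset.range t, rhat u ω)
      * ∑ b : Bool, mhat t b ω * φth t b ω) :
    ∫ ω, φQh ω ∂μ
      = (∑ t ∈ Finset.range T, ∫ ω,
          ((∏ u ∈ Finset.range t, rhat u ω) - (∏ u ∈ Finset.range t, r u ω))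
            * ∑ b : Bool, mhat t b ω * (μ[φth t b | H t]) ω ∂μ)
      + (∑ t ∈ Finset.range T, ∫ ω, (∏ u ∈ Finset.range t, r u ω)
            * ∑ b : Bool, mhat t b ω
                * ((μ[φth t b | H t]) ω + Qhat t b ω - Q t b ω) ∂μ)
      + ∑ t ∈ Finset.range T, ∫ ω, (∏ u ∈ Finset.range t, r u ω)
            * ∑ b : Bool, mhat t b ω * (Q t b ω - Qhat t b ω) ∂μ := by
  obtain ⟨K, hK⟩ := hsbdd
  obtain ⟨C, hC⟩ := hmhatbdd
  have hHle : ∀ t, H t ≤ ‹MeasurableSpace Ω› := hH ▸ history_le hX hA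
  have hs_meas : ∀ t, Measurable (s t) := fun t => (hs t).continuous.measurable
  have hphat_meas : ∀ t b, Measurable[H t] (phatb t b) :=
    hphatb ▸ fun t => (hpihatmeas t).binaryPropensity
  have hphat_mem : ∀ t b ω, phatb t b ω ∈ Set.Icc (0:ℝ) 1 :=
    hphatb ▸ fun t => binaryPropensity_mem_Icc (hpihat01 t)
  have hphat_amb : ∀ t b, Measurable (phatb t b) := fun t b => (hphat_meas t b).mono (hHle t) le_rfl
  have hp_meas : ∀ t b, Measurable (p t b) :=
    hp ▸ fun t b => stronglyMeasurable_condExp.measurable.mono (hHle t) le_rfl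
  have hp_mem : ∀ t b, ∀ᵐ ω ∂μ, p t b ω ∈ Set.Icc (0:ℝ) 1 :=
    hp ▸ fun t b => ae_condExp_ite_mem_Icc (hHle t) (hA t) b
  have hRhat_meas : ∀ t, StronglyMeasurable[H t] fun ω => ∏ u ∈ Finset.range t, rhat u ω := by
    intro t; subst hrhat hQhat
    exact (measurable_prod_ratio (hH ▸ history_mono X A) (hH ▸ fun t u => measurable_history_of_lt)
      (fun u => Measurable.shiftedPropensity (hs_meas u) (hphat_meas u)) hphat_meas
      t).stronglyMeasurable
  have hR_meas : ∀ t, Measurable fun ω => ∏ u ∈ Finset.range t, r u ω := by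
    intro t; subst hr hQ
    exact measurable_prod_ratio monotone_const (fun _ u _ => hA u)
      (fun u => Measurable.shiftedPropensity (hs_meas u) (hp_meas u)) hp_meas t
  rw [hφQh]
  refine integral_sum_mul_sum_eq_decomposition (Rhat := fun t ω => ∏ u ∈ Finset.range t, rhat u ω)
    (R := fun t ω => ∏ u ∈ Finset.range t, r u ω) hHle (fun t _ => hRhat_meas t)
    (fun t _ => memLp_top_finset_prod_of_bound _
      ((hRhat_meas t).mono (hHle t)).aestronglyMeasurable hrhatbdd)
    (fun t _ => memLp_top_finset_prod_of_bound _ (hR_meas t).aestronglyMeasurable hrbdd)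
    (fun t ht b => (hmhatmeas t (Finset.mem_range.1 ht) b).stronglyMeasurable)
    (fun t ht b => memLp_top_of_bound ((hmhatmeas t (Finset.mem_range.1 ht) b).mono (hHle t)
      le_rfl).aestronglyMeasurable C (hC t (Finset.mem_range.1 ht) b))
    (fun t => hφth ▸ integrable_shiftedPropensityInfluence (hs_meas t) (hs01 t)
      (fun x => (hK t x).1) (hA t) (hphat_amb t (a t)) (hphat_mem t (a t)))
    (fun t => hQhat ▸ integrable_shiftedPropensity (hs_meas t) (hs01 t) (hphat_amb t)
      fun b => ae_of_all _ (hphat_mem t b))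
    (fun t => hQ ▸ integrable_shiftedPropensity (hs_meas t) (hs01 t) (hp_meas t) (hp_mem t))

/-- **Backwards-in-time error decomposition of the weight component.**
Times `1,…,T` of the paper are indexed by `0,…,T-1`; the paper's products
`∏_{s=1}^{t-1}` correspond to products over `Finset.range t`. -/
theorem backwards_in_time_Q_decomposition
    {Ω : Type*} [MeasurableSpace Ω] (μ : Measure Ω) [IsProbabilityMeasure μ]
    (T d : ℕ) (hT : 1 ≤ T)
    (X : ℕ → Ω → (Fin d → ℝ)) (A : ℕ → Ω → Bool) (Y : Ω → ℝ)
    (hX : ∀ t, Measurable (X t)) (hA : ∀ t, Measurable (A t))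
    (hY : MemLp Y 2 μ)
    (a : ℕ → Bool)
    (s : ℕ → ℝ → ℝ) (hs : ∀ t, ContDiff ℝ 2 (s t))
    (hsbdd : ∃ K, ∀ t x, |deriv (s t) x| ≤ K ∧ |deriv (deriv (s t)) x| ≤ K)
    (hs01 : ∀ t, ∀ x ∈ Set.Icc (0:ℝ) 1, s t x ∈ Set.Icc (0:ℝ) 1)
    (H : ℕ → MeasurableSpace Ω)
    (hH : H = fun t =>
      (⨆ u ∈ Finset.range (t+1), MeasurableSpace.comap (X u) inferInstance)
        ⊔ (⨆ u ∈ Finset.range t, MeasurableSpace.comap (A u) inferInstance))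
    (p : ℕ → Bool → Ω → ℝ)
    (hp : p = fun t b => μ[(fun ω => if A t ω = b then (1:ℝ) else 0) | H t])
    (Q : ℕ → Bool → Ω → ℝ)
    (hQ : Q = fun t b ω => p t b ω
      + (if b = a t then (1:ℝ) else -1) * s t (p t (a t) ω) * (1 - p t (a t) ω))
    (r : ℕ → Ω → ℝ)
    (hr : r = fun t ω => Q t (A t ω) ω / p t (A t ω) ω)
    (hrbdd : ∃ K, ∀ t, ∀ᵐ ω ∂μ, |r t ω| ≤ K)
    (pihat : ℕ → Ω → ℝ)
    (hpihatmeas : ∀ t, Measurable[H t] (pihat t))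
    (hpihat01 : ∀ t ω, pihat t ω ∈ Set.Ioo (0:ℝ) 1)
    (phatb : ℕ → Bool → Ω → ℝ)
    (hphatb : phatb = fun t b ω => if b then pihat t ω else 1 - pihat t ω)
    (Qhat : ℕ → Bool → Ω → ℝ)
    (hQhat : Qhat = fun t b ω => phatb t b ω
      + (if b = a t then (1:ℝ) else -1) * s t (phatb t (a t) ω) * (1 - phatb t (a t) ω))
    (rhat : ℕ → Ω → ℝ)
    (hrhat : rhat = fun t ω => Qhat t (A t ω) ω / phatb t (A t ω) ω)
    (hrhatbdd : ∃ K, ∀ t, ∀ᵐ ω ∂μ, |rhat t ω| ≤ K)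
    (mhat : ℕ → Bool → Ω → ℝ)
    (hmhatmeas : ∀ t < T, ∀ b, Measurable[H t] (mhat t b))
    (hmhatbdd : ∃ C, ∀ t < T, ∀ b, ∀ᵐ ω ∂μ, |mhat t b ω| ≤ C)
    (φth : ℕ → Bool → Ω → ℝ)
    (hφth : φth = fun t b ω => (if b = a t then (1:ℝ) else -1)
      * ((if A t ω = a t then (1:ℝ) else 0) - phatb t (a t) ω)
      * (1 - s t (phatb t (a t) ω)
          + deriv (s t) (phatb t (a t) ω) * (1 - phatb t (a t) ω)))
    (φQh : Ω → ℝ)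
    (hφQh : φQh = fun ω => ∑ t ∈ Finset.range T, (∏ u ∈ Finset.range t, rhat u ω)
      * ∑ b : Bool, mhat t b ω * φth t b ω) :
    ∫ ω, φQh ω ∂μ
      = (∑ t ∈ Finset.range T, ∫ ω,
          ((∏ u ∈ Finset.range t, rhat u ω) - (∏ u ∈ Finset.range t, r u ω))
            * ∑ b : Bool, mhat t b ω * (μ[φth t b | H t]) ω ∂μ)
      + (∑ t ∈ Finset.range T, ∫ ω, (∏ u ∈ Finset.range t, r u ω)
            * ∑ b : Bool, mhat t b ω
                * ((μ[φth t b | H t]) ω + Qhat t b ω - Q t b ω) ∂μ)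
      + ∑ t ∈ Finset.range T, ∫ ω, (∏ u ∈ Finset.range t, r u ω)
            * ∑ b : Bool, mhat t b ω * (Q t b ω - Qhat t b ω) ∂μ :=
  backwards_in_time_Q_decomposition_general μ T d X A hX hA a s hs hsbdd hs01 H hH p hp Q hQ r hr
    hrbdd pihat hpihatmeas hpihat01 phatb hphatb Qhat hQhat rhat hrhat hrhatbdd mhat hmhatmeas
    hmhatbdd φth hφth φQh hφQh
end
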